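/- arXiv:1204.0713 — 2 statements merged into one kernel-verified Lean document; each statement's English description precedes it below -/
import Mathlib

section
/- For every Laurent polynomial a ∈ ℂ[t,t⁻¹], the iterated super-bracket {[e_{w₄−w₁}(a), q_{w₁+w₃}], q_{w₁+w₂}} — that is, X·q_{w₁+w₂} + q_{w₁+w₂}·X where X = e_{w₄−w₁}(a)·q_{w₁+w₃} − q_{w₁+w₃}·e_{w₄−w₁}(a) — equals Vir(a). (This is the computation defining the Virasoro element Vir(a) inside the matrix realization of the Cheng–Kac superalgebra.) -/
open LaurentPolynomial Matrix

noncomputable section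

/-- `R = ℂ[t,t⁻¹]`, the algebra of complex Laurent polynomials. -/
abbrev R := LaurentPolynomial ℂ

/-- Differentiation on Laurent polynomials, as a `ℂ`-linear endomorphism:
`D (T n) = n • T (n-1)`, i.e. `D f = f'`. -/
noncomputable def Der : Module.End ℂ R :=
  (Finsupp.lsum ℂ fun n : ℤ =>
    LinearMap.toSpanSingleton ℂ R ((n : ℂ) • LaurentPolynomial.T (n - 1)) :
      (ℤ →₀ ℂ) →ₗ[ℂ] R) ∘ₗ
    ((AddMonoidAlgebra.coeffLinearEquiv ℂ : R ≃ₗ[ℂ] (ℤ →₀ ℂ)) : R →ₗ[ℂ] (ℤ →₀ ℂ))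

/-- Multiplication by `a ∈ R` as a `ℂ`-linear endomorphism `m_a`. -/
noncomputable def mulE (a : R) : Module.End ℂ R := LinearMap.mulLeft ℂ a

/-- The ring of operators `E = End_ℂ(R)`. -/
abbrev E := Module.End ℂ R

/-- 8×8 matrices over `E`, written as 2×2 blocks of 4×4 matrices. -/
abbrev M8 := Matrix (Fin 4 ⊕ Fin 4) (Fin 4 ⊕ Fin 4) E

/-- `b_{ij} = e_{ij} - e_{ji}` (entries are the identity operator); indices 0-based. -/
noncomputable def bMat (i j : Fin 4) : Matrix (Fin 4) (Fin 4) E :=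
  Matrix.single i j 1 - Matrix.single j i 1

/-- `e_{w_i - w_j}(a) = [[e_{ij} m_a, 0],[0, -e_{ji} m_a]]`; indices 0-based. -/
noncomputable def eW (i j : Fin 4) (a : R) : M8 :=
  Matrix.fromBlocks (Matrix.single i j (mulE a)) 0 0
    (-(Matrix.single j i (mulE a)))

/-- `h_{w_i - w_j}(a) = [[(e_{ii}-e_{jj}) m_a, 0],[0, (e_{jj}-e_{ii}) m_a]]`; indices 0-based. -/
noncomputable def hW (i j : Fin 4) (a : R) : M8 :=
  Matrix.fromBlocks
    (Matrix.single i i (mulE a) - Matrix.single j j (mulE a)) 0 0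
    (Matrix.single j j (mulE a) - Matrix.single i i (mulE a))

/-- `φ` on the basis `b_{ij}` (`i < j`) of skew matrices (0-based indices):
`φ(b₁₂) = b₃₄`, `φ(b₁₃) = -b₂₄`, `φ(b₁₄) = b₂₃`, `φ(b₂₃) = b₁₄`, `φ(b₂₄) = -b₁₃`,
`φ(b₃₄) = b₁₂` (the involution `k = k' + k'' ↦ k' - k''`). -/
noncomputable def phiB (i j : Fin 4) : Matrix (Fin 4) (Fin 4) E :=
  if i = 0 ∧ j = 1 then bMat 2 3
  else if i = 0 ∧ j = 2 then -(bMat 1 3)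
  else if i = 0 ∧ j = 3 then bMat 1 2
  else if i = 1 ∧ j = 2 then bMat 0 3
  else if i = 1 ∧ j = 3 then -(bMat 0 2)
  else if i = 2 ∧ j = 3 then bMat 0 1
  else 0

/-- `q_{w_i + w_j} = [[0, b_{ij}],[φ(b_{ij})D, 0]]` for `i < j`; indices 0-based. -/
noncomputable def qP (i j : Fin 4) : M8 :=
  Matrix.fromBlocks 0 (bMat i j) (phiB i j * Matrix.scalar (Fin 4) Der) 0

/-- `q_{-w_i - w_j}(a) = [[0,0],[(e_{ij}+e_{ji}) m_a, 0]]`; indices 0-based. -/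
noncomputable def qM (i j : Fin 4) (a : R) : M8 :=
  Matrix.fromBlocks 0 0
    (Matrix.single i j (mulE a) + Matrix.single j i (mulE a)) 0

/-- `Vir(a) = [[I₄ m_a D + e₁₁ m_{a'}, 0],[0, I₄ m_a D + (I₄ - e₁₁) m_{a'}]]`. -/
noncomputable def Vir (a : R) : M8 :=
  Matrix.fromBlocks
    (Matrix.scalar (Fin 4) (mulE a * Der) + Matrix.single 0 0 (mulE (Der a))) 0 0
    (Matrix.scalar (Fin 4) (mulE a * Der) +
      (Matrix.scalar (Fin 4) (mulE (Der a)) - Matrix.single 0 0 (mulE (Der a))))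

/-
Commuting the block-off-diagonal `q_{w₁+w₃}` with the block-diagonal `e_{w₄-w₁}(a)` gives a
block-off-diagonal matrix, whose anticommutator with `q_{w₁+w₂}` is block diagonal; every block is
a sum of products of matrix units. The only input beyond matrix-unit arithmetic is the Leibniz
rule `D m_a = m_a D + m_{a'}`, which produces the `m_{a'}` terms of `Vir(a)`.
-/

theorem Der_C_mul_T (c : ℂ) (n : ℤ) : Der (C c * T n) = C (c * n) * T (n - 1) := by
  rw [← single_eq_C_mul_T]
  change Finsupp.lsum ℂ (fun k : ℤ => LinearMap.toSpanSingleton ℂ R ((k : ℂ) • T (k - 1)))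
    (AddMonoidAlgebra.coeff (AddMonoidAlgebra.single n c)) = _
  rw [AddMonoidAlgebra.coeff_single, Finsupp.lsum_single, LinearMap.toSpanSingleton_apply,
    smul_smul, smul_eq_C_mul]

theorem Der_mul (a b : R) : Der (a * b) = a * Der b + Der a * b := by
  induction a using LaurentPolynomial.induction_on' with
  | add p q hp hq => rw [add_mul, map_add, map_add, hp, hq]; ring
  | C_mul_T n c =>
    induction b using LaurentPolynomial.induction_on' with
    | add p q hp hq => rw [mul_add, map_add, map_add, hp, hq]; ring
    | C_mul_T m d =>
      have hT (k l : ℤ) (h : k + l = n + m - 1) : (T k * T l : R) = T (n + m - 1) := by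
        rw [← T_add, h]
      have hprod : C c * T n * (C d * T m) = C (c * d) * T (n + m) := by
        rw [T_add, map_mul]; ring
      rw [hprod, Der_C_mul_T, Der_C_mul_T, Der_C_mul_T]
      push_cast
      simp only [map_add, map_mul]
      linear_combination -(C c * C d * C (m : ℂ)) * hT n (m - 1) (by ring) -
        C c * C d * C (n : ℂ) * hT (n - 1) m (by ring)

theorem Der_mul_mulE (a : R) : Der * mulE a = mulE a * Der + mulE (Der a) :=
  LinearMap.ext fun f => by simp [mulE, Der_mul a f]

section BlockMatrix

variable {m n α : Type*} [Fintype m] [Fintype n] [Ring α]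

theorem fromBlocks_diagonal_commutator_offDiagonal (A : Matrix m m α) (D : Matrix n n α)
    (P : Matrix m n α) (Q : Matrix n m α) :
    fromBlocks A 0 0 D * fromBlocks 0 P Q 0 - fromBlocks 0 P Q 0 * fromBlocks A 0 0 D =
      fromBlocks 0 (A * P - P * D) (D * Q - Q * A) 0 := by
  simp [fromBlocks_multiply, sub_eq_add_neg, fromBlocks_neg, fromBlocks_add]

theorem fromBlocks_offDiagonal_anticommutator (P P' : Matrix m n α) (Q Q' : Matrix n m α) :
    fromBlocks 0 P Q 0 * fromBlocks 0 P' Q' 0 + fromBlocks 0 P' Q' 0 * fromBlocks 0 P Q 0 =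
      fromBlocks (P * Q' + P' * Q) 0 0 (Q * P' + Q' * P) := by
  simp [fromBlocks_multiply, fromBlocks_add]

end BlockMatrix

section MatrixUnits

variable {n α : Type*} [Fintype n] [DecidableEq n] [Semiring α]

theorem single_mul_scalar (i j : n) (x d : α) : single i j x * scalar n d = single i j (x * d) := by
  rw [scalar_apply, ← op_smul_eq_mul_diagonal, smul_single, MulOpposite.smul_eq_mul_unop]
  rfl

theorem scalar_eq_sum_single (d : α) : scalar n d = ∑ i, single i i d := by
  rw [sum_single_eq_diagonal]; rfl

end MatrixUnits

theorem bMat_mul_scalar (i j : Fin 4) (d : E) :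
    bMat i j * scalar (Fin 4) d = single i j d - single j i d := by
  simp only [bMat, Matrix.sub_mul, single_mul_scalar, one_mul]

theorem phiB_zero_one : phiB 0 1 = bMat 2 3 := rfl

theorem phiB_zero_two : phiB 0 2 = -bMat 1 3 := rfl

theorem eW_commutator_qP (a : R) :
    eW 3 0 a * qP 0 2 - qP 0 2 * eW 3 0 a =
      fromBlocks 0 (single 3 2 (mulE a) - single 2 3 (mulE a))
        (single 1 0 (Der * mulE a) - single 0 1 (mulE a * Der)) 0 := by
  rw [eW, qP, phiB_zero_two, Matrix.neg_mul, bMat_mul_scalar,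
    fromBlocks_diagonal_commutator_offDiagonal]
  congr 1
  · simp only [bMat, Matrix.mul_sub, Matrix.sub_mul, Matrix.mul_neg, single_mul_single_same,
      single_mul_single_of_ne, ne_eq, Fin.reduceEq, not_false_eq_true, mul_one, one_mul]
    abel
  · simp only [Matrix.mul_sub, Matrix.sub_mul, Matrix.neg_mul, Matrix.mul_neg,
      single_mul_single_same, single_mul_single_of_ne, ne_eq, Fin.reduceEq, not_false_eq_true]
    abel

/-- `{[e_{w₄-w₁}(a), q_{w₁+w₃}], q_{w₁+w₂}} = Vir(a)`
(indices in the paper are 1-based; here 0-based). -/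
theorem stmt0 (a : R) :
    (eW 3 0 a * qP 0 2 - qP 0 2 * eW 3 0 a) * qP 0 1
      + qP 0 1 * (eW 3 0 a * qP 0 2 - qP 0 2 * eW 3 0 a) = Vir a := by
  rw [eW_commutator_qP, qP, phiB_zero_one, bMat_mul_scalar, fromBlocks_offDiagonal_anticommutator,
    Vir]
  congr 1 <;>
  simp only [bMat, Matrix.mul_sub, Matrix.sub_mul, single_mul_single_same,
    single_mul_single_of_ne, ne_eq, Fin.reduceEq, not_false_eq_true, mul_one, one_mul] <;>
  simp only [Der_mul_mulE, scalar_eq_sum_single, Fin.sum_univ_four, single_add] <;>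
  abel
end
end

section
/- Let V be a vector space over ℂ, v ∈ V, e ∈ End_ℂ(V), and M ⊆ End_ℂ(V) a linear subspace. Let m, n be positive integers such that: (i) x₁∘x₂∘⋯∘x_n (v) = 0 for all x₁, …, x_n ∈ M; (ii) e^m (v) = 0; (iii) [[e,x],y] = 0 and [[x,e],e] = 0 for all x, y ∈ M. Then y₁∘y₂∘⋯∘y_{m+n} (v) = 0 whenever each y_i belongs to the subspace [M,e] = {xe − ex : x ∈ M}. -/
/-!
Write `D a = a * e - e * a`. Since every `D x` with `x ∈ M` commutes with `e`, the Leibniz rule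
gives `D^N (x₁ ⋯ x_N) = N! • D x₁ ⋯ D x_N`, so it suffices that `D^N (x₁ ⋯ x_N)` kills `v`, i.e.
that `e^j x₁ ⋯ x_N e^t v = 0` whenever `j + t = N = m + n`. For `t ≥ m` this is `e^m v = 0`.
Otherwise one shows that `e` maps a vector killed by all `k`-fold products of elements of `M`
to one killed by all `(k+1)`-fold products: moving `e` to the left produces the commutators
`x e - e x`, which commute with `M`. Hence `e^t v` is killed by all `(n + t)`-fold products.
-/

section Commutator

variable {A : Type*} [Ring A]

def adRight (e : A) : A →+ A := AddMonoidHom.mulRight e - AddMonoidHom.mulLeft e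

@[simp]
lemma adRight_apply (e a : A) : adRight e a = a * e - e * a := rfl

lemma adRight_mul (e a b : A) : adRight e (a * b) = a * adRight e b + adRight e a * b := by
  simp only [adRight_apply]
  noncomm_ring

lemma adRight_eq_zero_iff {e a : A} : adRight e a = 0 ↔ Commute a e := sub_eq_zero

lemma adRight_iterate_mul_of_commute {e z : A} (hz : Commute z e) (k : ℕ) (w : A) :
    (adRight e)^[k] (z * w) = z * (adRight e)^[k] w := by
  induction k generalizing w with
  | zero => rfl
  | succ k ih =>
    rw [Function.iterate_succ_apply, Function.iterate_succ_apply, adRight_mul,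
      adRight_eq_zero_iff.mpr hz, zero_mul, add_zero, ih]

lemma adRight_iterate_succ_mul {e x : A} (hx : Commute (adRight e x) e) (k : ℕ) (q : A) :
    (adRight e)^[k + 1] (x * q)
      = x * (adRight e)^[k + 1] q + (k + 1) • (adRight e x * (adRight e)^[k] q) := by
  induction k generalizing q with
  | zero =>
    rw [zero_add, one_smul, Function.iterate_one, Function.iterate_zero_apply, adRight_mul]
  | succ k ih =>
    rw [Function.iterate_succ_apply, adRight_mul, iterate_map_add, ih,
      adRight_iterate_mul_of_commute hx, ← Function.iterate_succ_apply,
      ← Function.iterate_succ_apply (adRight e) k, succ_nsmul _ (k + 1), add_assoc]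

lemma adRight_iterate_list_prod {e : A} (l : List A)
    (hl : ∀ x ∈ l, Commute (adRight e x) e) :
    (adRight e)^[l.length] l.prod = l.length.factorial • (l.map (adRight e)).prod := by
  induction l with
  | nil => simp
  | cons x l ih =>
    have hx := hl x List.mem_cons_self
    have hl' := fun a ha => hl a (List.mem_cons_of_mem x ha)
    have hcomm : Commute (l.map (adRight e)).prod e :=
      Commute.list_prod_left _ _ (by simpa using hl')
    rw [List.prod_cons, List.length_cons, adRight_iterate_succ_mul hx,
      Function.iterate_succ_apply', ih hl', map_nsmul, adRight_eq_zero_iff.mpr hcomm,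
      nsmul_zero, mul_zero, zero_add, List.map_cons, List.prod_cons, mul_smul_comm, smul_smul,
      Nat.factorial_succ]

variable {V : Type*} [AddCommGroup V] [Module A V]

lemma adRight_iterate_smul_eq_zero {e : A} {v : V} (k : ℕ) (a : A)
    (h : ∀ j t, j + t = k → (e ^ j * a * e ^ t) • v = 0) :
    ((adRight e)^[k] a) • v = 0 := by
  induction k generalizing a with
  | zero => simpa using h 0 0 rfl
  | succ k ih =>
    rw [Function.iterate_succ_apply]
    refine ih _ fun j t hjt => ?_
    have : e ^ j * adRight e a * e ^ t = e ^ j * a * e ^ (t + 1) - e ^ (j + 1) * a * e ^ t := by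
      rw [adRight_apply, pow_succ e j, pow_succ' e t]
      noncomm_ring
    rw [this, sub_smul, h j (t + 1) (by omega), h (j + 1) t (by omega), sub_zero]

end Commutator

section Annihilation

variable {A V : Type*} [Ring A] [AddCommGroup V] [Module A V]

def AnnihilatedByProducts (M : Set A) (k : ℕ) (w : V) : Prop :=
  ∀ x : Fin k → A, (∀ i, x i ∈ M) → (List.ofFn x).prod • w = 0

namespace AnnihilatedByProducts

variable {M : Set A} {k : ℕ} {w : V}

lemma zero_iff : AnnihilatedByProducts M 0 w ↔ w = 0 := by
  simp [AnnihilatedByProducts]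

lemma succ_iff : AnnihilatedByProducts M (k + 1) w ↔ ∀ a ∈ M, AnnihilatedByProducts M k (a • w) := by
  constructor
  · intro h a ha x hx
    have hmem : ∀ i, Fin.snoc (α := fun _ => A) x a i ∈ M :=
      Fin.lastCases (by simpa using ha) (fun i => by simpa using hx i)
    have := h _ hmem
    simpa only [List.ofFn_succ', Fin.snoc_castSucc, Fin.snoc_last, List.prod_concat,
      mul_smul] using this
  · intro h x hx
    rw [List.ofFn_succ', List.prod_concat, mul_smul]
    exact h _ (hx _) _ fun i => hx _

lemma zero : AnnihilatedByProducts M k (0 : V) := fun _ _ => smul_zero _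

lemma add {w' : V} (hw : AnnihilatedByProducts M k w) (hw' : AnnihilatedByProducts M k w') :
    AnnihilatedByProducts M k (w + w') := fun x hx => by
  rw [smul_add, hw x hx, hw' x hx, add_zero]

lemma succ (hw : AnnihilatedByProducts M k w) : AnnihilatedByProducts M (k + 1) w := fun x hx => by
  rw [List.ofFn_succ, List.prod_cons, mul_smul, hw _ fun i => hx _, smul_zero]

lemma mono {k' : ℕ} (hw : AnnihilatedByProducts M k w) (hk : k ≤ k') :
    AnnihilatedByProducts M k' w := by
  induction k', hk using Nat.le_induction with
  | base => exact hw
  | succ _ _ ih => exact ih.succ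

lemma smul_of_commute {c : A} (hc : ∀ b ∈ M, Commute b c) (hw : AnnihilatedByProducts M k w) :
    AnnihilatedByProducts M k (c • w) := fun x hx => by
  have hcomm : Commute (List.ofFn x).prod c :=
    Commute.list_prod_left _ _ fun b hb => by
      obtain ⟨i, rfl⟩ := List.mem_ofFn.mp hb
      exact hc _ (hx i)
  rw [← mul_smul, hcomm.eq, mul_smul, hw x hx, smul_zero]

lemma smul_succ {e : A} (hM : ∀ a ∈ M, ∀ b ∈ M, Commute b (adRight e a))
    (hw : AnnihilatedByProducts M k w) : AnnihilatedByProducts M (k + 1) (e • w) := by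
  induction k generalizing w with
  | zero =>
    rw [zero_iff.mp hw, smul_zero]
    exact AnnihilatedByProducts.zero
  | succ k ih =>
    refine succ_iff.mpr fun a ha => ?_
    have hswap : a • e • w = e • a • w + adRight e a • w := by
      rw [← mul_smul, ← mul_smul, ← add_smul, adRight_apply, add_sub_cancel]
    rw [hswap]
    exact (ih (succ_iff.mp hw a ha)).add (hw.smul_of_commute (hM a ha))

lemma pow_smul {e : A} (hM : ∀ a ∈ M, ∀ b ∈ M, Commute b (adRight e a))
    (hw : AnnihilatedByProducts M k w) (t : ℕ) :
    AnnihilatedByProducts M (k + t) (e ^ t • w) := by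
  induction t with
  | zero => simpa using hw
  | succ t ih => simpa [pow_succ', mul_smul, ← add_assoc] using ih.smul_succ hM

end AnnihilatedByProducts

end Annihilation

theorem stmt8_general (V : Type*) [AddCommGroup V] [Module ℂ V]
    (v : V) (e : Module.End ℂ V) (M : Submodule ℂ (Module.End ℂ V))
    (m n : ℕ)
    (h1 : ∀ x : Fin n → Module.End ℂ V, (∀ i, x i ∈ M) → (List.ofFn x).prod v = 0)
    (h2 : (e ^ m) v = 0)
    (h3 : ∀ x ∈ M, ∀ y ∈ M, (e * x - x * e) * y - y * (e * x - x * e) = 0)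
    (h4 : ∀ x ∈ M, (x * e - e * x) * e - e * (x * e - e * x) = 0) :
    ∀ y : Fin (m + n) → Module.End ℂ V,
      (∀ i, ∃ x ∈ M, y i = x * e - e * x) → (List.ofFn y).prod v = 0 := by
  intro y hy
  choose x hxM hxy using hy
  have hv : AnnihilatedByProducts (M : Set (Module.End ℂ V)) n v := h1
  have hM : ∀ a ∈ (M : Set (Module.End ℂ V)), ∀ b ∈ (M : Set (Module.End ℂ V)),
      Commute b (adRight e a) := fun a ha b hb => by
    have hc : Commute (e * a - a * e) b := sub_eq_zero.mp (h3 a ha b hb)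
    simpa [neg_sub] using hc.symm.neg_right
  have hD : (adRight e)^[m + n] (List.ofFn x).prod = (m + n).factorial • (List.ofFn y).prod := by
    have hDx : ∀ a ∈ List.ofFn x, Commute (adRight e a) e := fun a ha => by
      obtain ⟨i, rfl⟩ := List.mem_ofFn.mp ha
      exact sub_eq_zero.mp (h4 _ (hxM i))
    simpa [List.map_ofFn, Function.comp_def, ← hxy] using adRight_iterate_list_prod _ hDx
  have hkill : ((adRight e)^[m + n] (List.ofFn x).prod) • v = 0 :=
    adRight_iterate_smul_eq_zero _ _ fun j t hjt => by
      rw [mul_smul, mul_smul]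
      rcases le_or_gt m t with hmt | htm
      · rw [← Nat.sub_add_cancel hmt, pow_add, mul_smul, Module.End.smul_def _ v, h2,
          smul_zero, smul_zero, smul_zero]
      · rw [(hv.pow_smul hM t).mono (by omega) x hxM, smul_zero]
  rw [hD, smul_assoc, ← Nat.cast_smul_eq_nsmul ℂ] at hkill
  exact (smul_eq_zero.mp hkill).resolve_left (Nat.cast_ne_zero.mpr (Nat.factorial_ne_zero _))

/-- Lemma 4.10: let `V` be a complex vector space, `v ∈ V`,
`e ∈ End_ℂ(V)`, and `M ⊆ End_ℂ(V)` a linear subspace.  If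
(i) every `n`-fold composition of elements of `M` kills `v`,
(ii) `e^m v = 0`, and
(iii) `[[e,x],y] = 0` and `[[x,e],e] = 0` for all `x, y ∈ M`,
then every `(m+n)`-fold composition of elements of `[M,e] = {xe - ex : x ∈ M}`
kills `v`. -/
theorem stmt8 (V : Type*) [AddCommGroup V] [Module ℂ V]
    (v : V) (e : Module.End ℂ V) (M : Submodule ℂ (Module.End ℂ V))
    (m n : ℕ) (hm : 0 < m) (hn : 0 < n)
    (h1 : ∀ x : Fin n → Module.End ℂ V, (∀ i, x i ∈ M) → (List.ofFn x).prod v = 0)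
    (h2 : (e ^ m) v = 0)
    (h3 : ∀ x ∈ M, ∀ y ∈ M, (e * x - x * e) * y - y * (e * x - x * e) = 0)
    (h4 : ∀ x ∈ M, (x * e - e * x) * e - e * (x * e - e * x) = 0) :
    ∀ y : Fin (m + n) → Module.End ℂ V,
      (∀ i, ∃ x ∈ M, y i = x * e - e * x) → (List.ofFn y).prod v = 0 :=
  stmt8_general V v e M m n h1 h2 h3 h4
end
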